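/- arXiv:2106.07589 — 3 statements merged into one kernel-verified Lean document; each statement's English description precedes it below -/
import Mathlib

section
/- Let F be a function on the vertices of the triangular lattice (vertex set ℤ², with edges between (x,y) and (x',y') iff (x'-x, y'-y) ∈ {(1,0),(-1,0),(0,1),(0,-1),(1,1),(-1,-1)}) such that |F(u) - F(v)| = 1 whenever u and v are adjacent vertices lying in different level sets. Let S be a connected finite set of vertices, and let C be the unique infinite connected component of the complement of S. Then all vertices of C that are adjacent to S take values of F of the same parity, and any two adjacent such vertices have equal F-value; consequently at most one level-set component of F in the complement of S is exterior adjacent to S. -/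
/-!
Every vertex outside `S` adjacent to `S` differs by exactly one from the constant value of `F`
on `S`, so all such boundary vertices have the same parity and adjacent ones cannot differ by
one. What remains is topological: two boundary vertices `u`, `v` joined by a path avoiding `S`
are joined by a path inside the boundary. Let `A` be the boundary component of `u`. The
ℤ-valued cochain counting signed crossings of edges between `A` and `S` closes up around every
triangle, so, the triangulated plane being simply connected, it is the coboundary of a
potential `h`. Then `h` is constant along paths inside `S` and along paths inside its
complement, jumps by one from `u` to a neighbour in `S`, and does not jump from a boundary
vertex outside `A` to a neighbour in `S`; connectedness of `S` forces `v ∈ A`.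
-/

/-- Adjacency in the triangular lattice on `ℤ²`. -/
def triAdj (u v : ℤ × ℤ) : Prop :=
  (v.1 - u.1, v.2 - u.2) ∈
    ({(1, 0), (-1, 0), (0, 1), (0, -1), (1, 1), (-1, -1)} : Set (ℤ × ℤ))

/-- Reachability between two vertices by a path staying inside the set `T`. -/
def reachIn (T : Set (ℤ × ℤ)) (u v : ℤ × ℤ) : Prop :=
  Relation.ReflTransGen (fun a b => triAdj a b ∧ a ∈ T ∧ b ∈ T) u v

theorem triAdj_comm {u v : ℤ × ℤ} : triAdj u v ↔ triAdj v u := by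
  simp only [triAdj, Set.mem_insert_iff, Set.mem_singleton_iff, Prod.mk.injEq]
  omega

theorem triAdj_right (x y : ℤ) : triAdj (x, y) (x + 1, y) := by simp [triAdj]

theorem triAdj_up (x y : ℤ) : triAdj (x, y) (x, y + 1) := by simp [triAdj]

theorem triAdj_diag (x y : ℤ) : triAdj (x, y) (x + 1, y + 1) := by simp [triAdj]

theorem triAdj.induction {P : ℤ × ℤ → ℤ × ℤ → Prop} (symm : ∀ p q, P p q → P q p)
    (right : ∀ x y, P (x, y) (x + 1, y)) (up : ∀ x y, P (x, y) (x, y + 1))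
    (diag : ∀ x y, P (x, y) (x + 1, y + 1)) {p q : ℤ × ℤ} (h : triAdj p q) : P p q := by
  obtain ⟨x, y⟩ := p
  obtain ⟨x', y'⟩ := q
  simp only [triAdj, Set.mem_insert_iff, Set.mem_singleton_iff, Prod.mk.injEq] at h
  rcases h with ⟨hx, hy⟩ | ⟨hx, hy⟩ | ⟨hx, hy⟩ | ⟨hx, hy⟩ | ⟨hx, hy⟩ | ⟨hx, hy⟩
  · obtain ⟨rfl, rfl⟩ : x' = x + 1 ∧ y' = y := by omega
    exact right _ _
  · obtain ⟨rfl, rfl⟩ : x = x' + 1 ∧ y = y' := by omega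
    exact symm _ _ (right _ _)
  · obtain ⟨rfl, rfl⟩ : x' = x ∧ y' = y + 1 := by omega
    exact up _ _
  · obtain ⟨rfl, rfl⟩ : x = x' ∧ y = y' + 1 := by omega
    exact symm _ _ (up _ _)
  · obtain ⟨rfl, rfl⟩ : x' = x + 1 ∧ y' = y + 1 := by omega
    exact diag _ _
  · obtain ⟨rfl, rfl⟩ : x = x' + 1 ∧ y = y' + 1 := by omega
    exact symm _ _ (diag _ _)

theorem reachIn.mono {T T' : Set (ℤ × ℤ)} (hT : T ⊆ T') {u v : ℤ × ℤ} (h : reachIn T u v) :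
    reachIn T' u v :=
  Relation.ReflTransGen.mono (fun _ _ hab => ⟨hab.1, hT hab.2.1, hT hab.2.2⟩) _ _ h

theorem reachIn.eq_of_forall_triAdj {α : Type*} {T : Set (ℤ × ℤ)} {f : ℤ × ℤ → α}
    (hf : ∀ a ∈ T, ∀ b ∈ T, triAdj a b → f a = f b) {u v : ℤ × ℤ} (h : reachIn T u v) :
    f u = f v := by
  induction h with
  | refl => rfl
  | tail _ hbc ih => exact ih.trans (hf _ hbc.2.1 _ hbc.2.2 hbc.1)

theorem reachIn.inter_fiber {α : Type*} {T : Set (ℤ × ℤ)} {f : ℤ × ℤ → α}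
    (hf : ∀ a ∈ T, ∀ b ∈ T, triAdj a b → f a = f b) {u v : ℤ × ℤ} (h : reachIn T u v) :
    reachIn {w | w ∈ T ∧ f w = f u} u v := by
  induction h with
  | refl => exact .refl
  | @tail b c hub hbc ih =>
    have hb : f b = f u := (eq_of_forall_triAdj hf hub).symm
    exact ih.tail ⟨hbc.1, ⟨hbc.2.1, hb⟩, ⟨hbc.2.2, (hf _ hbc.2.1 _ hbc.2.2 hbc.1).symm.trans hb⟩⟩

section Potential

variable {G : Type*} [AddCommGroup G]

theorem Int.exists_add_one_eq_add (g : ℤ → G) : ∃ f : ℤ → G, ∀ y, f (y + 1) = f y + g y := by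
  refine ⟨fun y => ∑ k ∈ Finset.Ico 0 y, g k - ∑ k ∈ Finset.Ico y 0, g k, fun y => ?_⟩
  dsimp only
  rcases le_or_gt 0 y with hy | hy
  · rw [← Finset.sum_Ico_add_eq_sum_Ico_add_one hy, Finset.Ico_eq_empty_of_le hy,
      Finset.Ico_eq_empty_of_le (show (0 : ℤ) ≤ y + 1 by omega)]
    simp
  · rw [← Finset.insert_Ico_add_one_left_eq_Ico hy, Finset.sum_insert (by simp),
      Finset.Ico_eq_empty_of_le hy.le, Finset.Ico_eq_empty_of_le (show y + 1 ≤ 0 by omega)]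
    simp

/-- The potential is integrated along the `x`-axis and then along vertical lines. -/
theorem exists_potential_of_triangle (φ : ℤ × ℤ → ℤ × ℤ → G) (anti : ∀ p q, φ q p = -φ p q)
    (lower : ∀ x y : ℤ, φ (x, y) (x + 1, y) + φ (x + 1, y) (x + 1, y + 1) = φ (x, y) (x + 1, y + 1))
    (upper : ∀ x y : ℤ, φ (x, y) (x, y + 1) + φ (x, y + 1) (x + 1, y + 1) = φ (x, y) (x + 1, y + 1)) :
    ∃ h : ℤ × ℤ → G, ∀ p q, triAdj p q → φ p q = h q - h p := by
  obtain ⟨b, hb⟩ := Int.exists_add_one_eq_add fun x => φ (x, 0) (x + 1, 0)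
  choose c hc using fun x => Int.exists_add_one_eq_add fun y => φ (x, y) (x, y + 1)
  set h : ℤ × ℤ → G := fun p => b p.1 + c p.1 p.2 - c p.1 0
  have up x y : φ (x, y) (x, y + 1) = h (x, y + 1) - h (x, y) := by
    simp only [h, hc]; abel
  have square x y : φ (x, y + 1) (x + 1, y + 1) =
      φ (x, y) (x + 1, y) + φ (x + 1, y) (x + 1, y + 1) - φ (x, y) (x, y + 1) := by
    rw [lower, ← upper]; abel
  have right x y : φ (x, y) (x + 1, y) = h (x + 1, y) - h (x, y) := by
    let defect y := φ (x, y) (x + 1, y) - (h (x + 1, y) - h (x, y))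
    have defect_succ y : defect (y + 1) = defect y := by
      simp only [defect]; rw [square, up, up]; abel
    suffices defect y = 0 from sub_eq_zero.mp this
    induction y using Int.induction_on with
    | zero => simp only [defect, h, hb]; abel
    | succ y ih => rwa [defect_succ]
    | pred y ih => rwa [← defect_succ, sub_add_cancel]
  refine ⟨h, fun p q hpq =>
    triAdj.induction (P := fun p q => φ p q = h q - h p) ?_ right up ?_ hpq⟩
  · intro p q hpq; rw [anti, hpq, neg_sub]
  · intro x y; rw [← lower, right, up]; abel

end Potential

def extBoundary (S : Set (ℤ × ℤ)) : Set (ℤ × ℤ) := {w | w ∉ S ∧ ∃ s ∈ S, triAdj w s}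

open Classical in
noncomputable def crossing (A S : Set (ℤ × ℤ)) (p q : ℤ × ℤ) : ℤ :=
  (if p ∈ A ∧ q ∈ S then 1 else 0) - (if p ∈ S ∧ q ∈ A then 1 else 0)

theorem crossing_comm (A S : Set (ℤ × ℤ)) (p q : ℤ × ℤ) : crossing A S q p = -crossing A S p q := by
  classical
  simp only [crossing, neg_sub, and_comm]

theorem crossing_add_crossing {A S : Set (ℤ × ℤ)} (hA : A ⊆ extBoundary S)
    (hA_closed : ∀ x ∈ A, ∀ y ∈ extBoundary S, triAdj x y → y ∈ A) {p q r : ℤ × ℤ}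
    (hpq : triAdj p q) (hqr : triAdj q r) (hpr : triAdj p r) :
    crossing A S p q + crossing A S q r = crossing A S p r := by
  classical
  have hSA : ∀ x ∈ S, x ∉ A := fun x hxS hxA => (hA hxA).1 hxS
  have mem_iff : ∀ s ∈ S, ∀ x ∉ S, ∀ y ∉ S, triAdj s x → triAdj s y → triAdj x y →
      (x ∈ A ↔ y ∈ A) := fun s hs x hx y hy hsx hsy hxy =>
    ⟨fun h => hA_closed x h y ⟨hy, s, hs, triAdj_comm.mp hsy⟩ hxy,
     fun h => hA_closed y h x ⟨hx, s, hs, triAdj_comm.mp hsx⟩ (triAdj_comm.mp hxy)⟩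
  by_cases hp : p ∈ S <;> by_cases hq : q ∈ S <;> by_cases hr : r ∈ S <;>
    simp only [crossing, hp, hq, hr, hSA, and_true, true_and, and_false, false_and, and_self,
      ↓reduceIte, sub_self, sub_zero, zero_sub, add_zero, zero_add, neg_add_cancel, neg_inj]
  -- remaining cases: exactly one vertex of the triangle lies in `S`
  · rw [mem_iff p hp q hq r hr hpq hpr hqr]
  · rw [mem_iff q hq p hp r hr (triAdj_comm.mp hpq) hqr hpr, add_neg_cancel]
  · rw [mem_iff r hr q hq p hp (triAdj_comm.mp hqr) (triAdj_comm.mp hpr) (triAdj_comm.mp hpq)]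

theorem mem_of_reachIn_compl {S A : Set (ℤ × ℤ)} (hS : ∀ u ∈ S, ∀ v ∈ S, reachIn S u v)
    (hA : A ⊆ extBoundary S) (hA_closed : ∀ x ∈ A, ∀ y ∈ extBoundary S, triAdj x y → y ∈ A)
    {u v : ℤ × ℤ} (hu : u ∈ A) (hv : v ∈ extBoundary S) (huv : reachIn Sᶜ u v) : v ∈ A := by
  classical
  obtain ⟨h, hh⟩ := exists_potential_of_triangle (crossing A S) (crossing_comm A S)
    (fun x y => crossing_add_crossing hA hA_closed (triAdj_right x y) (triAdj_up (x + 1) y)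
      (triAdj_diag x y))
    (fun x y => crossing_add_crossing hA hA_closed (triAdj_up x y) (triAdj_right x (y + 1))
      (triAdj_diag x y))
  have hSA : ∀ x ∈ S, x ∉ A := fun x hxS hxA => (hA hxA).1 hxS
  have h_const_S : ∀ a ∈ S, ∀ b ∈ S, triAdj a b → h a = h b := fun a ha b hb hab => by
    have := hh a b hab
    simp only [crossing, ha, hb, hSA, and_true, and_false, ↓reduceIte, sub_self] at this
    omega
  have h_const_compl : ∀ a ∈ Sᶜ, ∀ b ∈ Sᶜ, triAdj a b → h a = h b := fun a ha b hb hab => by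
    have := hh a b hab
    simp only [crossing, show a ∉ S from ha, show b ∉ S from hb, and_false, false_and,
      ↓reduceIte, sub_self] at this
    omega
  obtain ⟨-, su, hsu, husu⟩ := hA hu
  obtain ⟨hvS, sv, hsv, hvsv⟩ := hv
  have jump_u := hh u su husu
  have jump_v := hh v sv hvsv
  have h_uv := reachIn.eq_of_forall_triAdj h_const_compl huv
  have h_su_sv := reachIn.eq_of_forall_triAdj h_const_S (hS su hsu sv hsv)
  by_contra hvA
  simp only [crossing, hu, hsu, hvA, hsv, hSA, and_self, and_true, and_false, ↓reduceIte,
    sub_zero, sub_self] at jump_u jump_v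
  omega

theorem reachIn_extBoundary_of_reachIn_compl {S : Set (ℤ × ℤ)}
    (hS : ∀ u ∈ S, ∀ v ∈ S, reachIn S u v) {u v : ℤ × ℤ} (hu : u ∈ extBoundary S)
    (hv : v ∈ extBoundary S) (huv : reachIn Sᶜ u v) : reachIn (extBoundary S) u v :=
  (mem_of_reachIn_compl hS (A := {w | w ∈ extBoundary S ∧ reachIn (extBoundary S) u w})
    (fun _ hw => hw.1) (fun _ hx _ hy hxy => ⟨hy, hx.2.tail ⟨hxy, hx.1, hy⟩⟩) ⟨hu, .refl⟩ hv
    huv).2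

theorem emod_two_eq_of_mem_extBoundary {F : ℤ × ℤ → ℤ} {S : Set (ℤ × ℤ)}
    (hF : ∀ u v, triAdj u v → F u = F v ∨ |F u - F v| = 1)
    (hSconst : ∀ u ∈ S, ∀ v ∈ S, F u = F v) (hSmax : ∀ v ∉ S, ∀ s ∈ S, triAdj v s → F v ≠ F s)
    {u v : ℤ × ℤ} (hu : u ∈ extBoundary S) (hv : v ∈ extBoundary S) : F u % 2 = F v % 2 := by
  obtain ⟨huS, s, hs, hus⟩ := hu
  obtain ⟨hvS, t, ht, hvt⟩ := hv
  have hst := hSconst s hs t ht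
  have hu1 := (hF u s hus).resolve_left (hSmax u huS s hs hus)
  have hv1 := (hF v t hvt).resolve_left (hSmax v hvS t ht hvt)
  rw [abs_eq zero_le_one] at hu1 hv1
  omega

theorem eq_of_triAdj_of_mem_extBoundary {F : ℤ × ℤ → ℤ} {S : Set (ℤ × ℤ)}
    (hF : ∀ u v, triAdj u v → F u = F v ∨ |F u - F v| = 1)
    (hSconst : ∀ u ∈ S, ∀ v ∈ S, F u = F v) (hSmax : ∀ v ∉ S, ∀ s ∈ S, triAdj v s → F v ≠ F s)
    {u v : ℤ × ℤ} (hu : u ∈ extBoundary S) (hv : v ∈ extBoundary S) (huv : triAdj u v) :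
    F u = F v := by
  have hparity := emod_two_eq_of_mem_extBoundary hF hSconst hSmax hu hv
  refine (hF u v huv).resolve_right fun h => ?_
  rw [abs_eq zero_le_one] at h
  omega

theorem at_most_one_exterior_adjacent_component_general
    (F : ℤ × ℤ → ℤ)
    (hF : ∀ u v, triAdj u v → F u = F v ∨ |F u - F v| = 1)
    (S : Set (ℤ × ℤ))
    (hSconn : ∀ u ∈ S, ∀ v ∈ S, reachIn S u v)
    (hSconst : ∀ u ∈ S, ∀ v ∈ S, F u = F v)
    (hSmax : ∀ v ∉ S, ∀ s ∈ S, triAdj v s → F v ≠ F s)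
    (C : Set (ℤ × ℤ)) (hCsub : C ⊆ Sᶜ)
    (hCconn : ∀ u ∈ C, ∀ v ∈ C, reachIn C u v) :
    (∀ u ∈ C, ∀ v ∈ C, (∃ s ∈ S, triAdj u s) → (∃ s ∈ S, triAdj v s) →
      F u % 2 = F v % 2) ∧
    (∀ u ∈ C, ∀ v ∈ C, (∃ s ∈ S, triAdj u s) → (∃ s ∈ S, triAdj v s) →
      triAdj u v → F u = F v) ∧
    (∀ u ∈ C, ∀ v ∈ C, (∃ s ∈ S, triAdj u s) → (∃ s ∈ S, triAdj v s) →
      reachIn {w | w ∉ S ∧ F w = F u} u v) := by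
  have hC : ∀ u ∈ C, (∃ s ∈ S, triAdj u s) → u ∈ extBoundary S :=
    fun u hu hus => ⟨hCsub hu, hus⟩
  have hF_bd : ∀ u ∈ extBoundary S, ∀ v ∈ extBoundary S, triAdj u v → F u = F v :=
    fun _ hu _ hv => eq_of_triAdj_of_mem_extBoundary hF hSconst hSmax hu hv
  refine ⟨fun u hu v hv hus hvs => emod_two_eq_of_mem_extBoundary hF hSconst hSmax
      (hC u hu hus) (hC v hv hvs),
    fun u hu v hv hus hvs => hF_bd u (hC u hu hus) v (hC v hv hvs),
    fun u hu v hv hus hvs => ?_⟩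
  have h_bd : reachIn (extBoundary S) u v := reachIn_extBoundary_of_reachIn_compl hSconn
    (hC u hu hus) (hC v hv hvs) ((hCconn u hu v hv).mono hCsub)
  exact (h_bd.inter_fiber hF_bd).mono fun w hw => show w ∉ S ∧ F w = F u from ⟨hw.1.1, hw.2⟩

/-- let `F : ℤ² → ℤ` change by exactly `1` across adjacent vertices in
different level sets; let `S` be a finite connected set on which `F` is constant and which
is a maximal level-set component (adjacent vertices outside `S` have different `F`-values),
and let `C` be the (unique) infinite connected component of the complement of `S`. Then all
vertices of `C` adjacent to `S` have `F`-values of the same parity; any two adjacent such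
vertices have equal `F`-value; and consequently any two such vertices lie in the same
level-set component of the complement of `S`, i.e. at most one level-set component is
exterior adjacent to `S`. -/
theorem at_most_one_exterior_adjacent_component
    (F : ℤ × ℤ → ℤ)
    (hF : ∀ u v, triAdj u v → F u = F v ∨ |F u - F v| = 1)
    (S : Set (ℤ × ℤ)) (hSfin : S.Finite)
    (hSconn : ∀ u ∈ S, ∀ v ∈ S, reachIn S u v)
    (hSconst : ∀ u ∈ S, ∀ v ∈ S, F u = F v)
    (hSmax : ∀ v ∉ S, ∀ s ∈ S, triAdj v s → F v ≠ F s)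
    (C : Set (ℤ × ℤ)) (hCsub : C ⊆ Sᶜ) (hCinf : C.Infinite)
    (hCconn : ∀ u ∈ C, ∀ v ∈ C, reachIn C u v)
    (hCcomp : ∀ u ∈ C, ∀ v, v ∉ S → triAdj u v → v ∈ C) :
    (∀ u ∈ C, ∀ v ∈ C, (∃ s ∈ S, triAdj u s) → (∃ s ∈ S, triAdj v s) →
      F u % 2 = F v % 2) ∧
    (∀ u ∈ C, ∀ v ∈ C, (∃ s ∈ S, triAdj u s) → (∃ s ∈ S, triAdj v s) →
      triAdj u v → F u = F v) ∧
    (∀ u ∈ C, ∀ v ∈ C, (∃ s ∈ S, triAdj u s) → (∃ s ∈ S, triAdj v s) →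
      reachIn {w | w ∉ S ∧ F w = F u} u v) :=
  at_most_one_exterior_adjacent_component_general F hF S hSconn hSconst hSmax C hCsub hCconn
end

section
/- Suppose the empirical measures (1/L) Σ_{i=1}^L δ_{λᵢ(L)/L} of strictly increasing integer tuples λ(L) = (λ₁ < ⋯ < λ_L) converge weakly as L → ∞ to a probability measure μ on ℝ with bounded support. Then σ(λ)² := (1/L)Σ(λᵢ/L)² − ((1/L)Σλᵢ/L)² − 1/12 converges to Var(μ) − 1/12, and this limit is ≥ 0, with equality if and only if μ is the uniform (Lebesgue) measure on an interval of length 1. -/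
/-!
The points `λᵢ/L` and the support of `μ` stay in a fixed compact interval, on which `x` and `x²`
agree with bounded continuous functions; so weak convergence gives convergence of both moments.

The points `λᵢ/L` are distinct multiples of `1/L`, so an interval of length `ℓ` holds at most
`ℓL + 1` of them. Testing the weak limit against a continuous function squeezed between the
indicators of `[a, b]` and `[a - δ, b + δ]` gives `μ [a, b] ≤ b - a`, hence `μ ≤ volume`.

For such `μ` and any `m`, integrate `1/4 - (x - m)² ≤ max (1/4 - (x - m)²) 0` against `μ` and
bound the right side by its Lebesgue integral `1/6`: this gives `∫ (x - m)² dμ ≥ 1/12`. In case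
of equality the gap vanishes `μ`-a.e., so `μ` lives on `[m - 1/2, m + 1/2]`, where `μ ≤ volume`
and total mass `1` force `μ` to be Lebesgue measure there.
-/

open MeasureTheory Filter Set ProbabilityTheory Topology BoundedContinuousFunction

lemma tendsto_mean_comp_of_continuous {x : (L : ℕ) → Fin L → ℝ} {μ : Measure ℝ}
    (hweak : ∀ f : ℝ →ᵇ ℝ,
      Tendsto (fun L : ℕ => (1 / (L : ℝ)) * ∑ i, f (x L i)) atTop (𝓝 (∫ y, f y ∂μ)))
    {R : ℝ} (hx : ∀ L i, |x L i| ≤ R) (hμ : ∀ᵐ y ∂μ, |y| ≤ R) {g : ℝ → ℝ} (hg : Continuous g) :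
    Tendsto (fun L : ℕ => (1 / (L : ℝ)) * ∑ i, g (x L i)) atTop (𝓝 (∫ y, g y ∂μ)) := by
  have hR : -R ≤ R := by linarith [(abs_nonneg _).trans (hx 1 0)]
  let f : ℝ →ᵇ ℝ := (mkOfCompact ⟨fun y : Icc (-R) R => g y, by fun_prop⟩).compContinuous
    ⟨projIcc (-R) R hR, continuous_projIcc⟩
  have hf : ∀ y, |y| ≤ R → f y = g y := fun y hy => by
    simp [f, projIcc_of_mem hR (abs_le.1 hy)]
  convert hweak f using 2
  · simp only [hf _ (hx _ _)]
  · exact integral_congr_ae (hμ.mono fun y hy => (hf y hy).symm)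

open Finset in
lemma card_filter_intCast_div_mem_Icc_le {ι : Type*} [Fintype ι] {f : ι → ℤ}
    (hf : Function.Injective f) {r : ℝ} (hr : 0 < r) {c d : ℝ} (hcd : c ≤ d) :
    (#{i | (f i : ℝ) / r ∈ Icc c d} : ℝ) ≤ (d - c) * r + 1 := by
  have hsub : #{i | (f i : ℝ) / r ∈ Icc c d} ≤ #(Finset.Icc ⌈c * r⌉ ⌊d * r⌋) := by
    refine Finset.card_le_card_of_injOn f (fun i hi => ?_) hf.injOn
    simp only [Finset.coe_filter, Set.mem_ofPred_eq, Set.mem_Icc, le_div_iff₀ hr,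
      div_le_iff₀ hr] at hi
    simp only [Finset.coe_Icc, Set.mem_Icc, Int.ceil_le, Int.le_floor]
    exact hi.2
  have hcard : (#(Finset.Icc ⌈c * r⌉ ⌊d * r⌋) : ℝ) = ⌊d * r⌋ + 1 - ⌈c * r⌉ := by
    have : ⌈c * r⌉ ≤ ⌊d * r⌋ + 1 :=
      (Int.ceil_mono (by nlinarith)).trans (Int.ceil_le_floor_add_one _)
    rw [Int.card_Icc, ← Int.cast_natCast, Int.toNat_of_nonneg (by omega)]
    push_cast
    ring
  calc (#{i | (f i : ℝ) / r ∈ Icc c d} : ℝ) ≤ #(Finset.Icc ⌈c * r⌉ ⌊d * r⌋) := by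
        exact_mod_cast hsub
    _ = ⌊d * r⌋ + 1 - ⌈c * r⌉ := hcard
    _ ≤ (d - c) * r + 1 := by linarith [Int.floor_le (d * r), Int.le_ceil (c * r)]

lemma exists_indicator_Icc_le_boundedContinuous_le (a b : ℝ) {δ : ℝ} (hδ : 0 < δ) :
    ∃ φ : ℝ →ᵇ ℝ, (∀ x, (Icc a b).indicator (1 : ℝ → ℝ) x ≤ φ x) ∧
      ∀ x, φ x ≤ (Icc (a - δ) (b + δ)).indicator (1 : ℝ → ℝ) x := by
  refine ⟨(thickenedIndicator hδ (Icc a b)).comp _ NNReal.isometry_coe.lipschitz,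
    fun x => ?_, fun x => ?_⟩
  · by_cases hx : x ∈ Icc a b
    · simp [hx, thickenedIndicator_one hδ _ hx]
    · simp [hx]
  · by_cases hx : x ∈ Metric.thickening δ (Icc a b)
    · obtain ⟨z, ⟨hza, hzb⟩, hxz⟩ := Metric.mem_thickening_iff.1 hx
      rw [Real.dist_eq, abs_lt] at hxz
      have : x ∈ Icc (a - δ) (b + δ) := ⟨by linarith, by linarith⟩
      simpa [this] using thickenedIndicator_le_one hδ _ x
    · rw [BoundedContinuousFunction.comp_apply, thickenedIndicator_zero hδ _ hx, NNReal.coe_zero]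
      exact indicator_nonneg (fun _ _ => zero_le_one) x

open Finset in
lemma measure_Icc_le_of_tendsto_sum_div {lam : (L : ℕ) → Fin L → ℤ}
    (hinj : ∀ L, Function.Injective (lam L)) {μ : Measure ℝ} [IsFiniteMeasure μ]
    (hweak : ∀ f : ℝ →ᵇ ℝ, Tendsto (fun L : ℕ => (1 / (L : ℝ)) * ∑ i, f ((lam L i : ℝ) / L))
      atTop (𝓝 (∫ x, f x ∂μ)))
    {a b : ℝ} (hab : a ≤ b) : μ (Icc a b) ≤ ENNReal.ofReal (b - a) := by
  rw [← ofReal_measureReal]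
  refine ENNReal.ofReal_le_ofReal (le_of_forall_pos_le_add fun ε hε => ?_)
  obtain ⟨φ, hφ_ge, hφ_le⟩ := exists_indicator_Icc_le_boundedContinuous_le a b (half_pos hε)
  have hsum : ∀ L : ℕ, 0 < L →
      (1 / (L : ℝ)) * ∑ i, φ ((lam L i : ℝ) / L) ≤ b - a + ε + 1 / L := fun L hL => by
    have hL : (0 : ℝ) < L := by exact_mod_cast hL
    have hcount := card_filter_intCast_div_mem_Icc_le (hinj L) hL
      (c := a - ε / 2) (d := b + ε / 2) (by linarith)
    calc (1 / (L : ℝ)) * ∑ i, φ ((lam L i : ℝ) / L)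
        ≤ (1 / L) * ∑ i, (Icc (a - ε / 2) (b + ε / 2)).indicator 1 ((lam L i : ℝ) / L) := by
          gcongr with i
          exact hφ_le _
      _ = (1 / L) * #{i | (lam L i : ℝ) / L ∈ Icc (a - ε / 2) (b + ε / 2)} := by
          simp [Set.indicator_apply]
      _ ≤ (1 / L) * ((b + ε / 2 - (a - ε / 2)) * L + 1) := by gcongr
      _ = b - a + ε + 1 / L := by field_simp; ring
  calc μ.real (Icc a b) = ∫ x, (Icc a b).indicator (1 : ℝ → ℝ) x ∂μ :=
        (integral_indicator_one measurableSet_Icc).symm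
    _ ≤ ∫ x, φ x ∂μ := integral_mono ((integrable_indicator_iff measurableSet_Icc).2
        (integrable_const 1).integrableOn) (φ.integrable μ) hφ_ge
    _ ≤ b - a + ε := by
        simpa using le_of_tendsto_of_tendsto (hweak φ)
          (tendsto_const_nhds.add tendsto_one_div_atTop_nhds_zero_nat)
          (eventually_gt_atTop 0 |>.mono hsum)

lemma le_volume_of_measure_Ioc_le {μ : Measure ℝ} [IsProbabilityMeasure μ]
    (h : ∀ a b, a ≤ b → μ (Ioc a b) ≤ ENNReal.ofReal (b - a)) : μ ≤ volume := by
  -- `h` makes `x ↦ x - cdf μ x` monotone, so Lebesgue measure is `μ` plus a Stieltjes measure.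
  have hF : ∀ a b, a ≤ b → cdf μ b - cdf μ a ≤ b - a := fun a b hab => by
    have := h a b hab
    rwa [← measure_cdf μ, StieltjesFunction.measure_Ioc,
      ENNReal.ofReal_le_ofReal_iff (by linarith)] at this
  let G : StieltjesFunction ℝ :=
    { toFun := fun x => x - cdf μ x
      mono' := fun a b hab => by linarith [hF a b hab]
      right_continuous' := fun x => continuousWithinAt_id.sub ((cdf μ).right_continuous x) }
  have hsplit : StieltjesFunction.id = cdf μ + G := StieltjesFunction.ext fun x => by
    change x = cdf μ x + (x - cdf μ x)
    ring
  rw [Real.volume_eq_stieltjes_id, hsplit, StieltjesFunction.measure_add, measure_cdf]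
  exact Measure.le_add_right le_rfl

lemma integral_max_quarter_sub_sq_sub (m : ℝ) : ∫ x, max (1 / 4 - (x - m) ^ 2) 0 = 1 / 6 := by
  rw [integral_sub_right_eq_self (fun x => max (1 / 4 - x ^ 2) 0) m,
    ← setIntegral_eq_integral_of_forall_compl_eq_zero (s := Icc (-1 / 2) (1 / 2)) ?_,
    setIntegral_congr_fun measurableSet_Icc (g := fun x => 1 / 4 - x ^ 2) ?_,
    integral_Icc_eq_integral_Ioc, ← intervalIntegral.integral_of_le (by norm_num),
    intervalIntegral.integral_sub intervalIntegrable_const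
      ((continuous_pow 2).intervalIntegrable _ _), integral_pow]
  · norm_num
  · intro x hx
    exact max_eq_left (by nlinarith [hx.1, hx.2])
  · intro x hx
    rw [mem_Icc, not_and_or, not_le, not_le] at hx
    exact max_eq_right (by rcases hx with hx | hx <;> nlinarith)

lemma integrable_max_quarter_sub_sq_sub (m : ℝ) :
    Integrable (fun x : ℝ => max (1 / 4 - (x - m) ^ 2) 0) := by
  refine Continuous.integrable_of_hasCompactSupport (by fun_prop)
    (HasCompactSupport.intro (isCompact_Icc (a := m - 1 / 2) (b := m + 1 / 2)) fun x hx => ?_)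
  rw [mem_Icc, not_and_or, not_le, not_le] at hx
  exact max_eq_right (by rcases hx with hx | hx <;> nlinarith)

section VarianceLowerBound

variable {μ : Measure ℝ}

lemma integral_max_quarter_sub_sq_sub_le_of_le_volume (hle : μ ≤ volume) (m : ℝ) :
    ∫ x, max (1 / 4 - (x - m) ^ 2) 0 ∂μ ≤ 1 / 6 := by
  rw [← integral_max_quarter_sub_sq_sub m]
  exact integral_mono_measure hle (ae_of_all _ fun x => le_max_right _ _)
    (integrable_max_quarter_sub_sq_sub m)

variable [IsProbabilityMeasure μ]

lemma integral_max_quarter_sub_sq_sub_sub_le (hle : μ ≤ volume) {m : ℝ}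
    (hint : Integrable (fun x => (x - m) ^ 2) μ) :
    ∫ x, (max (1 / 4 - (x - m) ^ 2) 0 - (1 / 4 - (x - m) ^ 2)) ∂μ
      ≤ ∫ x, (x - m) ^ 2 ∂μ - 1 / 12 := by
  have hint' : Integrable (fun x => 1 / 4 - (x - m) ^ 2) μ := (integrable_const _).sub hint
  rw [integral_sub ((integrable_max_quarter_sub_sq_sub m).mono_measure hle) hint',
    integral_sub (integrable_const _) hint, integral_const, probReal_univ, one_smul]
  linarith [integral_max_quarter_sub_sq_sub_le_of_le_volume hle m]

lemma one_twelfth_le_integral_sq_sub_of_le_volume (hle : μ ≤ volume) {m : ℝ}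
    (hint : Integrable (fun x => (x - m) ^ 2) μ) :
    1 / 12 ≤ ∫ x, (x - m) ^ 2 ∂μ := by
  have := integral_max_quarter_sub_sq_sub_sub_le hle hint
  linarith [integral_nonneg (μ := μ) fun x => sub_nonneg.2 (le_max_left (1 / 4 - (x - m) ^ 2) 0)]

lemma ae_mem_Icc_of_integral_sq_sub_eq (hle : μ ≤ volume) {m : ℝ}
    (hint : Integrable (fun x => (x - m) ^ 2) μ) (heq : ∫ x, (x - m) ^ 2 ∂μ = 1 / 12) :
    ∀ᵐ x ∂μ, x ∈ Icc (m - 1 / 2) (m + 1 / 2) := by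
  have hnonneg : 0 ≤ fun x => max (1 / 4 - (x - m) ^ 2) 0 - (1 / 4 - (x - m) ^ 2) :=
    fun x => sub_nonneg.2 (le_max_left _ _)
  have hzero := (integral_eq_zero_iff_of_nonneg hnonneg
    (((integrable_max_quarter_sub_sq_sub m).mono_measure hle).sub
      ((integrable_const (1 / 4 : ℝ)).sub hint))).1
    (le_antisymm ((integral_max_quarter_sub_sq_sub_sub_le hle hint).trans_eq (by rw [heq]; ring))
      (integral_nonneg hnonneg))
  filter_upwards [hzero] with x hx
  have : (x - m) ^ 2 ≤ 1 / 4 := by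
    simpa [sub_eq_zero, max_eq_left_iff] using hx
  constructor <;> nlinarith

lemma eq_volume_restrict_Icc_of_ae_mem (hle : μ ≤ volume) {a : ℝ}
    (h : ∀ᵐ x ∂μ, x ∈ Icc a (a + 1)) : μ = volume.restrict (Icc a (a + 1)) := by
  have : IsProbabilityMeasure (volume.restrict (Icc a (a + 1))) := ⟨by simp [Real.volume_Icc]⟩
  refine Measure.eq_of_le_of_isProbabilityMeasure ?_
  calc μ = μ.restrict (Icc a (a + 1)) := (Measure.restrict_eq_self_of_ae_mem h).symm
    _ ≤ volume.restrict (Icc a (a + 1)) := Measure.restrict_mono le_rfl hle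

lemma variance_id_volume_restrict_Icc (a : ℝ) :
    Var[id; volume.restrict (Icc a (a + 1))] = 1 / 12 := by
  have hmean : ∫ x in Icc a (a + 1), id x = a + 1 / 2 := by
    rw [integral_Icc_eq_integral_Ioc, ← intervalIntegral.integral_of_le (by linarith)]
    simp only [id, integral_id]
    ring
  rw [variance_eq_integral measurable_id.aemeasurable, hmean, integral_Icc_eq_integral_Ioc,
    ← intervalIntegral.integral_of_le (by linarith)]
  simp only [id, intervalIntegral.integral_comp_sub_right (fun x => x ^ 2), integral_pow]
  ring

lemma one_twelfth_le_variance_id_of_le_volume (hle : μ ≤ volume) (hX : MemLp id 2 μ) :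
    1 / 12 ≤ Var[id; μ] := by
  rw [variance_eq_integral measurable_id.aemeasurable]
  exact one_twelfth_le_integral_sq_sub_of_le_volume hle (hX.sub (memLp_const _)).integrable_sq

lemma variance_id_eq_one_twelfth_iff (hle : μ ≤ volume) (hX : MemLp id 2 μ) :
    Var[id; μ] = 1 / 12 ↔ ∃ a, μ = volume.restrict (Icc a (a + 1)) := by
  refine ⟨fun h => ⟨μ[id] - 1 / 2, ?_⟩, ?_⟩
  · rw [variance_eq_integral measurable_id.aemeasurable] at h
    refine eq_volume_restrict_Icc_of_ae_mem hle ?_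
    convert ae_mem_Icc_of_integral_sq_sub_eq hle (hX.sub (memLp_const _)).integrable_sq h
      using 4
    ring
  · rintro ⟨a, rfl⟩
    exact variance_id_volume_restrict_Icc a

end VarianceLowerBound

/-- suppose the empirical measures `(1/L) Σᵢ δ_{λᵢ(L)/L}` of strictly
increasing integer tuples `λ(L)` (with uniformly bounded supports) converge weakly to a
probability measure `μ` with bounded support. Then
`σ(λ)² = (1/L)Σ(λᵢ/L)² − ((1/L)Σλᵢ/L)² − 1/12` converges to `Var(μ) − 1/12`, this limit is
nonnegative, and it vanishes iff `μ` is the uniform measure on an interval of length `1`. -/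
theorem sigmaSq_tendsto_variance_sub_one_twelfth
    (lam : (L : ℕ) → Fin L → ℤ)
    (hmono : ∀ L, StrictMono (lam L))
    (hbd : ∃ M : ℝ, ∀ (L : ℕ) (i : Fin L), |((lam L i : ℤ) : ℝ)| ≤ M * L)
    (μ : Measure ℝ) [IsProbabilityMeasure μ]
    (hsupp : ∃ M : ℝ, μ {x | M < |x|} = 0)
    (hweak : ∀ f : BoundedContinuousFunction ℝ ℝ,
      Tendsto (fun L : ℕ => (1 / (L : ℝ)) * ∑ i : Fin L, f (((lam L i : ℤ) : ℝ) / L))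
        atTop (nhds (∫ x, f x ∂μ))) :
    Tendsto (fun L : ℕ =>
        (1 / (L : ℝ)) * ∑ i : Fin L, (((lam L i : ℤ) : ℝ) / L) ^ 2
          - ((1 / (L : ℝ)) * ∑ i : Fin L, ((lam L i : ℤ) : ℝ) / L) ^ 2 - 1 / 12)
      atTop (nhds ((∫ x, x ^ 2 ∂μ) - (∫ x, x ∂μ) ^ 2 - 1 / 12)) ∧
    0 ≤ (∫ x, x ^ 2 ∂μ) - (∫ x, x ∂μ) ^ 2 - 1 / 12 ∧
    ((∫ x, x ^ 2 ∂μ) - (∫ x, x ∂μ) ^ 2 - 1 / 12 = 0 ↔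
      ∃ a : ℝ, μ = volume.restrict (Set.Icc a (a + 1))) := by
  obtain ⟨M₁, hM₁⟩ := hbd
  obtain ⟨M₂, hM₂⟩ := hsupp
  have hx (L : ℕ) (i : Fin L) : |(lam L i : ℝ) / L| ≤ max M₁ M₂ := by
    have hL : (0 : ℝ) < L := by exact_mod_cast i.pos
    rw [abs_div, Nat.abs_cast, div_le_iff₀ hL]
    exact (hM₁ L i).trans (mul_le_mul_of_nonneg_right (le_max_left _ _) hL.le)
  have hμ : ∀ᵐ y ∂μ, |y| ≤ max M₁ M₂ :=
    (ae_iff.2 (by simpa using hM₂) : ∀ᵐ y ∂μ, |y| ≤ M₂).mono fun y hy =>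
      hy.trans (le_max_right _ _)
  have hX : MemLp id 2 μ := MemLp.of_bound aestronglyMeasurable_id _ hμ
  have hle : μ ≤ volume := le_volume_of_measure_Ioc_le fun a b hab =>
    (measure_mono Ioc_subset_Icc_self).trans
      (measure_Icc_le_of_tendsto_sum_div (fun L => (hmono L).injective) hweak hab)
  have hvar : (∫ x, x ^ 2 ∂μ) - (∫ x, x ∂μ) ^ 2 = Var[id; μ] := by
    rw [variance_eq_sub hX]
    rfl
  refine ⟨?_, ?_, ?_⟩
  · exact ((tendsto_mean_comp_of_continuous hweak hx hμ (continuous_pow 2)).sub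
      ((tendsto_mean_comp_of_continuous hweak hx hμ continuous_id).pow 2)).sub_const _
  · linarith [one_twelfth_le_variance_id_of_le_volume hle hX]
  · rw [hvar, sub_eq_zero]
    exact variance_id_eq_one_twelfth_iff hle hX
end

section
/- Among all probability measures μ on ℝ that are absolutely continuous with density bounded above by 1, the variance Var(μ) = ∫x²dμ − (∫x dμ)² is at least 1/12, with equality exactly for the uniform measure on an interval of length 1. -/
open MeasureTheory ProbabilityTheory Set

/-! With `m` the mean and `I = [m - 1/2, m + 1/2]`, the weight `g x = (x - m)² - 1/4` is `≤ 0`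
on `I` and `≥ 0` off it, so a density `f ≤ 1` loses against `𝟙_I` pointwise:
`g (f - 𝟙_I) ≥ 0`. Integrating gives `Var μ - 1/4 = ∫ g dμ ≥ ∫_I g = -1/6`. Equality forces
`f = 𝟙_I` a.e., because `g` vanishes only at the two endpoints of `I`. -/

section Bathtub

variable {α : Type*} [MeasurableSpace α] {μ ν : Measure α} {s : Set α} {g : α → ℝ}

lemma integral_sub_setIntegral_eq_integral_rnDeriv_mul_sub_indicator
    [SigmaFinite μ] [μ.HaveLebesgueDecomposition ν] (hac : μ ≪ ν)
    (hs : MeasurableSet s) (hgμ : Integrable g μ) (hgs : IntegrableOn g s ν) :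
    ∫ x, g x ∂μ - ∫ x in s, g x ∂ν =
      ∫ x, ((μ.rnDeriv ν x).toReal * g x - s.indicator g x) ∂ν := by
  rw [integral_sub ((integrable_toReal_rnDeriv_mul_iff hac).2 hgμ)
    ((integrable_indicator_iff hs).2 hgs), integral_toReal_rnDeriv_mul hac,
    integral_indicator hs]

lemma rnDeriv_mul_sub_indicator_nonneg (hd : ∀ᵐ x ∂ν, μ.rnDeriv ν x ≤ 1)
    (hg_in : ∀ x ∈ s, g x ≤ 0) (hg_out : ∀ x ∉ s, 0 ≤ g x) :
    0 ≤ᵐ[ν] fun x ↦ (μ.rnDeriv ν x).toReal * g x - s.indicator g x := by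
  filter_upwards [hd] with x hx
  have hf : (μ.rnDeriv ν x).toReal ≤ 1 := ENNReal.toReal_le_of_le_ofReal zero_le_one (by simpa)
  by_cases hxs : x ∈ s
  · rw [Pi.zero_apply, indicator_of_mem hxs]
    nlinarith [mul_nonneg_of_nonpos_of_nonpos (sub_nonpos.2 hf) (hg_in x hxs)]
  · rw [indicator_of_notMem hxs, sub_zero]
    exact mul_nonneg ENNReal.toReal_nonneg (hg_out x hxs)

theorem setIntegral_le_integral_of_rnDeriv_le_one
    [SigmaFinite μ] [μ.HaveLebesgueDecomposition ν] (hac : μ ≪ ν)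
    (hd : ∀ᵐ x ∂ν, μ.rnDeriv ν x ≤ 1) (hs : MeasurableSet s)
    (hg_in : ∀ x ∈ s, g x ≤ 0) (hg_out : ∀ x ∉ s, 0 ≤ g x)
    (hgμ : Integrable g μ) (hgs : IntegrableOn g s ν) :
    ∫ x in s, g x ∂ν ≤ ∫ x, g x ∂μ := by
  rw [← sub_nonneg, integral_sub_setIntegral_eq_integral_rnDeriv_mul_sub_indicator hac hs hgμ hgs]
  exact integral_nonneg_of_ae (rnDeriv_mul_sub_indicator_nonneg hd hg_in hg_out)

theorem integral_eq_setIntegral_iff_eq_restrict_of_rnDeriv_le_one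
    [SigmaFinite μ] [μ.HaveLebesgueDecomposition ν] (hac : μ ≪ ν)
    (hd : ∀ᵐ x ∂ν, μ.rnDeriv ν x ≤ 1) (hs : MeasurableSet s)
    (hg_in : ∀ x ∈ s, g x ≤ 0) (hg_out : ∀ x ∉ s, 0 ≤ g x) (hg_ne : ∀ᵐ x ∂ν, g x ≠ 0)
    (hgμ : Integrable g μ) (hgs : IntegrableOn g s ν) :
    ∫ x, g x ∂μ = ∫ x in s, g x ∂ν ↔ μ = ν.restrict s := by
  refine ⟨fun heq ↦ ?_, fun h ↦ by rw [h]⟩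
  have hzero : (fun x ↦ (μ.rnDeriv ν x).toReal * g x - s.indicator g x) =ᵐ[ν] 0 := by
    rw [← integral_eq_zero_iff_of_nonneg_ae (rnDeriv_mul_sub_indicator_nonneg hd hg_in hg_out)
      (((integrable_toReal_rnDeriv_mul_iff hac).2 hgμ).sub ((integrable_indicator_iff hs).2 hgs)),
      ← integral_sub_setIntegral_eq_integral_rnDeriv_mul_sub_indicator hac hs hgμ hgs, heq,
      sub_self]
  have hrn : μ.rnDeriv ν =ᵐ[ν] s.indicator 1 := by
    filter_upwards [hzero, hg_ne, hd] with x hx hgx hfx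
    rw [Pi.zero_apply] at hx
    rw [← ENNReal.ofReal_toReal (ne_top_of_le_ne_top ENNReal.one_ne_top hfx)]
    by_cases hxs : x ∈ s
    · rw [indicator_of_mem hxs] at hx ⊢
      have : ((μ.rnDeriv ν x).toReal - 1) * g x = 0 := by linear_combination hx
      simp [sub_eq_zero.1 ((mul_eq_zero.1 this).resolve_right hgx)]
    · rw [indicator_of_notMem hxs, sub_zero] at hx
      simp [indicator_of_notMem hxs, (mul_eq_zero.1 hx).resolve_right hgx]
  rw [← Measure.withDensity_rnDeriv_eq μ ν hac, withDensity_congr_ae hrn,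
    withDensity_indicator_one hs]

end Bathtub

lemma setIntegral_Icc_id {a b : ℝ} (hab : a ≤ b) : ∫ x in Icc a b, x = (b ^ 2 - a ^ 2) / 2 := by
  rw [integral_Icc_eq_integral_Ioc, ← intervalIntegral.integral_of_le hab, integral_id]

lemma setIntegral_Icc_sq_sub_sq (m : ℝ) {r : ℝ} (hr : 0 ≤ r) :
    ∫ x in Icc (m - r) (m + r), ((x - m) ^ 2 - r ^ 2) = -(4 / 3) * r ^ 3 := by
  rw [integral_Icc_eq_integral_Ioc, ← intervalIntegral.integral_of_le (by linarith),
    intervalIntegral.integral_sub (Continuous.intervalIntegrable (by fun_prop) _ _)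
      intervalIntegrable_const,
    intervalIntegral.integral_comp_sub_right (· ^ 2), integral_pow, intervalIntegral.integral_const]
  rw [smul_eq_mul]
  ring

lemma integral_sub_integral_sq_sub_const {μ : Measure ℝ} [IsProbabilityMeasure μ]
    (hX : MemLp id 2 μ) (c : ℝ) :
    ∫ x, ((x - ∫ y, y ∂μ) ^ 2 - c) ∂μ = ∫ x, x ^ 2 ∂μ - (∫ x, x ∂μ) ^ 2 - c := by
  have hsq : Integrable (fun x ↦ (x - ∫ y, y ∂μ) ^ 2) μ := (hX.sub (memLp_const _)).integrable_sq
  rw [integral_sub hsq (integrable_const c), integral_const, probReal_univ, one_smul]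
  exact congrArg (· - c) <| (variance_eq_integral hX.aemeasurable).symm.trans (variance_eq_sub hX)

/-- bathtub principle for the variance: among probability measures on `ℝ`
absolutely continuous with density bounded by `1` and with finite second moment, the
variance is at least `1/12`, with equality exactly for the uniform measure on an interval
of length `1`. -/
theorem variance_ge_one_twelfth_of_density_le_one
    (μ : Measure ℝ) [IsProbabilityMeasure μ]
    (hac : μ ≪ volume) (hd : ∀ᵐ x ∂volume, μ.rnDeriv volume x ≤ 1)
    (hint : Integrable (fun x => x ^ 2) μ) :
    (1 / 12 : ℝ) ≤ (∫ x, x ^ 2 ∂μ) - (∫ x, x ∂μ) ^ 2 ∧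
    ((∫ x, x ^ 2 ∂μ) - (∫ x, x ∂μ) ^ 2 = 1 / 12 ↔
      ∃ a : ℝ, μ = volume.restrict (Set.Icc a (a + 1))) := by
  set m := ∫ x, x ∂μ with hm
  set g : ℝ → ℝ := fun x ↦ (x - m) ^ 2 - (1 / 2) ^ 2
  set I := Icc (m - 1 / 2) (m + 1 / 2)
  have hX : MemLp id 2 μ := (memLp_two_iff_integrable_sq measurable_id.aestronglyMeasurable).2 hint
  have hμg : ∫ x, g x ∂μ = ∫ x, x ^ 2 ∂μ - m ^ 2 - (1 / 2) ^ 2 :=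
    integral_sub_integral_sq_sub_const hX _
  have hIg : ∫ x in I, g x = -(4 / 3) * (1 / 2) ^ 3 := setIntegral_Icc_sq_sub_sq m (by norm_num)
  have hg_in : ∀ x ∈ I, g x ≤ 0 := fun x ⟨h₁, h₂⟩ ↦ by simp only [g]; nlinarith
  have hg_out : ∀ x ∉ I, 0 ≤ g x := fun x hx ↦ by
    simp only [g]
    rcases not_and_or.1 hx with h | h <;> nlinarith [not_le.1 h]
  have hg_ne : ∀ᵐ x, g x ≠ 0 := by
    filter_upwards [volume.ae_ne (m - 1 / 2), volume.ae_ne (m + 1 / 2)] with x h₁ h₂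
    have : g x = (x - (m - 1 / 2)) * (x - (m + 1 / 2)) := by ring
    rw [this]
    exact mul_ne_zero (sub_ne_zero.2 h₁) (sub_ne_zero.2 h₂)
  have hgμ : Integrable g μ := (hX.sub (memLp_const m)).integrable_sq.sub (integrable_const _)
  have hgI : IntegrableOn g I := (by fun_prop : Continuous g).integrableOn_Icc
  refine ⟨?_, ?_⟩
  · linarith [setIntegral_le_integral_of_rnDeriv_le_one hac hd measurableSet_Icc hg_in hg_out
      hgμ hgI]
  calc _ ↔ ∫ x, g x ∂μ = ∫ x in I, g x := by constructor <;> intro <;> linarith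
    _ ↔ μ = volume.restrict I := integral_eq_setIntegral_iff_eq_restrict_of_rnDeriv_le_one hac hd
          measurableSet_Icc hg_in hg_out hg_ne hgμ hgI
    _ ↔ ∃ a : ℝ, μ = volume.restrict (Icc a (a + 1)) := by
      refine ⟨fun h ↦ ⟨m - 1 / 2, by rw [h, show m - 1 / 2 + 1 = m + 1 / 2 by ring]⟩,
        fun ⟨a, ha⟩ ↦ ?_⟩
      have hma : m = a + 1 / 2 := by rw [hm, ha, setIntegral_Icc_id (by linarith)]; ring
      simp only [ha, I, hma, add_sub_cancel_right, add_assoc, add_halves]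
end
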